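/- arXiv:2405.18962 — 3 statements merged into one kernel-verified Lean document; each statement's English description precedes it below -/
import Mathlib

section
/- With the setup of data explained by (A,B,C,D) with state x: if J_i(x) has full row rank for some i ∈ [0,T−1], then for each k ∈ [0,i], J_k(x) has full row rank, rank H_k = (k+1)m + rank Ω_k, and rank G_k = (k+1)m + rank Ω_{k−1}, where G_k is H_k with its last p rows deleted. -/
open Matrix
noncomputable section

/-- `obsMat A C k` is the observability matrix Ω_k, the stack of C, CA, ..., CA^k. -/
def obsMat {ι : Type*} [Fintype ι] [DecidableEq ι] {p : ℕ}
    (A : Matrix ι ι ℝ) (C : Matrix (Fin p) ι ℝ) (k : ℕ) :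
    Matrix (Fin (k + 1) × Fin p) ι ℝ :=
  Matrix.of fun ir j => (C * A ^ (ir.1 : ℕ)) ir.2 j

/-- `obsRank A C (k+1) = rank Ω_k`; `obsRank A C 0 = rank Ω_{-1} = 0` (void matrix). -/
def obsRank {ι : Type*} [Fintype ι] [DecidableEq ι] {p : ℕ}
    (A : Matrix ι ι ℝ) (C : Matrix (Fin p) ι ℝ) : ℕ → ℕ
  | 0 => 0
  | k + 1 => (obsMat A C k).rank

/-- ρ_k = rank Ω_k − rank Ω_{k-1}. -/
def rho {ι : Type*} [Fintype ι] [DecidableEq ι] {p : ℕ}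
    (A : Matrix ι ι ℝ) (C : Matrix (Fin p) ι ℝ) (k : ℕ) : ℕ :=
  obsRank A C (k + 1) - obsRank A C k

/-- The lag ℓ(C,A): the smallest k ≥ 0 with rank Ω_k = rank Ω_{k-1}. -/
def lag {ι : Type*} [Fintype ι] [DecidableEq ι] {p : ℕ}
    (A : Matrix ι ι ℝ) (C : Matrix (Fin p) ι ℝ) : ℕ :=
  sInf {k | obsRank A C (k + 1) = obsRank A C k}

/-- (C,A) is observable iff rank Ω_{n-1} = n where n is the state dimension. -/
def Observable {ι : Type*} [Fintype ι] [DecidableEq ι] {p : ℕ}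
    (A : Matrix ι ι ℝ) (C : Matrix (Fin p) ι ℝ) : Prop :=
  obsRank A C (Fintype.card ι) = Fintype.card ι

/-- Block Hankel matrix of depth k+1 built from f_0, ..., f_{T-1}. -/
def hankel {r T : ℕ} (f : Fin T → Fin r → ℝ) (k : ℕ) :
    Matrix (Fin (k + 1) × Fin r) (Fin (T - k)) ℝ :=
  Matrix.of fun ia j =>
    f ⟨(ia.1 : ℕ) + (j : ℕ), by have h1 := ia.1.isLt; have h2 := j.isLt; omega⟩ ia.2

/-- H_k : Hankel matrix of depth k+1 of the stacked data (u; y). -/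
def Hmat {m p T : ℕ} (u : Fin T → Fin m → ℝ) (y : Fin T → Fin p → ℝ) (k : ℕ) :
    Matrix ((Fin (k + 1) × Fin m) ⊕ (Fin (k + 1) × Fin p)) (Fin (T - k)) ℝ :=
  Matrix.fromRows (hankel u k) (hankel y k)

/-- G_k : H_k with its last p rows (the y_k block) deleted. -/
def Gmat {m p T : ℕ} (u : Fin T → Fin m → ℝ) (y : Fin T → Fin p → ℝ) (k : ℕ) :
    Matrix ((Fin (k + 1) × Fin m) ⊕ (Fin k × Fin p)) (Fin (T - k)) ℝ :=
  Matrix.fromRows (hankel u k)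
    (Matrix.of fun ia j =>
      y ⟨(ia.1 : ℕ) + (j : ℕ), by have h1 := ia.1.isLt; have h2 := j.isLt; omega⟩ ia.2)

/-- δ_k = rank H_k − rank G_k. -/
def delta {m p T : ℕ} (u : Fin T → Fin m → ℝ) (y : Fin T → Fin p → ℝ) (k : ℕ) : ℕ :=
  (Hmat u y k).rank - (Gmat u y k).rank

/-- (A,B,C,D) explains the data (u,y) with state sequence x. -/
def Explains {ι : Type*} [Fintype ι] {m p T : ℕ}
    (A : Matrix ι ι ℝ) (B : Matrix ι (Fin m) ℝ)
    (C : Matrix (Fin p) ι ℝ) (D : Matrix (Fin p) (Fin m) ℝ)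
    (u : Fin T → Fin m → ℝ) (y : Fin T → Fin p → ℝ) (x : Fin (T + 1) → ι → ℝ) : Prop :=
  ∀ t : Fin T,
    x t.succ = A.mulVec (x t.castSucc) + B.mulVec (u t) ∧
    y t = C.mulVec (x t.castSucc) + D.mulVec (u t)

/-- J_k(x): the state row block x_{[0,T-k-1]} stacked over the depth-(k+1) input Hankel matrix. -/
def Jmat {ι : Type*} {m T : ℕ} (u : Fin T → Fin m → ℝ) (x : Fin (T + 1) → ι → ℝ) (k : ℕ) :
    Matrix (ι ⊕ (Fin (k + 1) × Fin m)) (Fin (T - k)) ℝ :=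
  Matrix.fromRows (Matrix.of fun i j => x ⟨(j : ℕ), by have := j.isLt; omega⟩ i) (hankel u k)


/-!
The dynamics factor the data matrices through the state–input matrix: variation of constants gives
`y_{t+a} = C A^a x_t + ∑_{s ≤ a} M_{a-s} u_{t+s}` with Markov parameters `M_0 = D`,
`M_{j+1} = C A^j B`, hence `H_k = Φ_k J_k(x)` and `G_k = Ψ_k J_k(x)`. Full row rank of `J_i(x)`
passes to `J_k(x)` for `k ≤ i`, because `J_k(x)` restricted to its first `T - i` columns consists of
rows of `J_i(x)`. A right factor of full row rank does not change the rank, and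
`rank [[0, I], [Ω, Θ]] = #I + rank Ω` since a kernel vector must vanish on the identity block.
-/

namespace Matrix

variable {K : Type*} [Field K] {α β γ n n' : Type*}

theorem rank_eq_card_iff_linearIndependent_row [Fintype α] [Fintype n] (M : Matrix α n K) :
    M.rank = Fintype.card α ↔ LinearIndependent K M.row := by
  rw [M.rank_eq_finrank_span_row, linearIndependent_iff_card_eq_finrank_span, Set.finrank, eq_comm]

theorem rank_submatrix_eq_card_of_injective [Fintype α] [Fintype β] [Fintype n]
    (M : Matrix α n K) {f : β → α} (hf : Function.Injective f) (hM : M.rank = Fintype.card α) :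
    (M.submatrix f id).rank = Fintype.card β := by
  rw [rank_eq_card_iff_linearIndependent_row] at hM ⊢
  exact hM.comp f hf

theorem rank_eq_card_of_rank_submatrix_eq_card [Fintype α] [Fintype n] [Fintype n']
    (M : Matrix α n K) (g : n' → n) (hM : (M.submatrix id g).rank = Fintype.card α) :
    M.rank = Fintype.card α := by
  rw [rank_eq_card_iff_linearIndependent_row] at hM ⊢
  exact LinearIndependent.of_comp (LinearMap.funLeft K K g) hM

theorem rank_mul_eq_left_of_rank_eq_card [Fintype β] [Fintype γ] [DecidableEq β]
    (M : Matrix α β K) (N : Matrix β γ K) (hN : N.rank = Fintype.card β) :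
    (M * N).rank = M.rank := by
  have hrange : LinearMap.range N.mulVecLin = ⊤ :=
    Submodule.eq_top_of_finrank_eq (by rw [Module.finrank_fintype_fun_eq_card, ← hN]; rfl)
  rw [rank, mulVecLin_mul, LinearMap.range_comp_of_range_eq_top _ hrange, rank]

theorem rank_fromBlocks_zero_one [Fintype β] [Fintype γ] [DecidableEq β]
    (Ω : Matrix α γ K) (Θ : Matrix α β K) :
    (fromBlocks 0 1 Ω Θ : Matrix (β ⊕ α) (γ ⊕ β) K).rank = Fintype.card β + Ω.rank := by
  set Φ : Matrix (β ⊕ α) (γ ⊕ β) K := fromBlocks 0 1 Ω Θ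
  let E : (γ → K) →ₗ[K] (γ ⊕ β → K) :=
    (LinearEquiv.sumArrowLequivProdArrow γ β K K).symm.toLinearMap ∘ₗ LinearMap.inl K _ _
  have hE_inl (w : γ → K) : E w ∘ Sum.inl = w := rfl
  have hE_inr (w : γ → K) : E w ∘ Sum.inr = 0 := rfl
  have hE : Function.Injective E := fun v w h => by
    rw [← hE_inl v, ← hE_inl w, h]
  have hker : LinearMap.ker Φ.mulVecLin = (LinearMap.ker Ω.mulVecLin).map E := by
    ext v
    simp only [LinearMap.mem_ker, mulVecLin_apply, Submodule.mem_map, Φ, fromBlocks_mulVec]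
    constructor
    · intro hv
      have hβ : v ∘ Sum.inr = 0 := by simpa using congrArg (fun w => w ∘ Sum.inl) hv
      refine ⟨v ∘ Sum.inl, by simpa [hβ] using congrArg (fun w => w ∘ Sum.inr) hv, ?_⟩
      ext (c | b)
      · rfl
      · exact (congrFun hβ b).symm
    · rintro ⟨w, hw, rfl⟩
      simp [hE_inl, hE_inr, hw]
  have hΦ := LinearMap.finrank_range_add_finrank_ker Φ.mulVecLin
  have hΩ := LinearMap.finrank_range_add_finrank_ker Ω.mulVecLin
  rw [hker, ← (Submodule.equivMapOfInjective E hE _).finrank_eq] at hΦ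
  simp only [Module.finrank_fintype_fun_eq_card, Fintype.card_sum] at hΦ hΩ
  change Φ.rank + _ = _ at hΦ
  change Ω.rank + _ = _ at hΩ
  omega

end Matrix

section Trajectory

variable {R : Type*} [Semiring R] {ι κ ν : Type*} [Fintype ι] [DecidableEq ι] [Fintype κ]
  (A : Matrix ι ι R) (B : Matrix ι κ R) (C : Matrix ν ι R) (D : Matrix ν κ R)

def markovParam : ℕ → Matrix ν κ R
  | 0 => D
  | j + 1 => C * A ^ j * B

variable {A B C D} {x : ℕ → ι → R} {u : ℕ → κ → R} {y : ℕ → ν → R} {N : ℕ}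

theorem state_eq_sum (hx : ∀ n < N, x (n + 1) = A *ᵥ x n + B *ᵥ u n) :
    ∀ {t a : ℕ}, t + a ≤ N →
      x (t + a) = (A ^ a) *ᵥ x t + ∑ s ∈ Finset.range a, (A ^ (a - 1 - s) * B) *ᵥ u (t + s)
  | t, 0, _ => by simp
  | t, a + 1, h => by
    rw [← add_assoc, hx _ (by omega), state_eq_sum hx (by omega), mulVec_add, mulVec_mulVec,
      ← pow_succ', Finset.sum_range_succ, Matrix.mulVec_sum, add_assoc]
    congr 2
    · refine Finset.sum_congr rfl fun s hs => ?_
      rw [mulVec_mulVec, ← Matrix.mul_assoc, ← pow_succ']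
      have := Finset.mem_range.mp hs
      congr 3
      omega
    · simp

theorem output_eq_sum (hx : ∀ n < N, x (n + 1) = A *ᵥ x n + B *ᵥ u n)
    (hy : ∀ n < N, y n = C *ᵥ x n + D *ᵥ u n) {t a : ℕ} (h : t + a < N) :
    y (t + a) = (C * A ^ a) *ᵥ x t +
      ∑ s ∈ Finset.range (a + 1), markovParam A B C D (a - s) *ᵥ u (t + s) := by
  rw [hy _ h, state_eq_sum hx h.le, mulVec_add, mulVec_mulVec, Finset.sum_range_succ,
    Matrix.mulVec_sum, add_assoc, Nat.sub_self]
  congr 2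
  refine Finset.sum_congr rfl fun s hs => ?_
  have := Finset.mem_range.mp hs
  obtain ⟨j, hj, hj'⟩ : ∃ j, a - s = j + 1 ∧ a - 1 - s = j := ⟨a - 1 - s, by omega, rfl⟩
  rw [mulVec_mulVec, hj, hj', markovParam, Matrix.mul_assoc]

end Trajectory

-- Zero-padding the finite data lets the trajectory identities above be applied without bound proofs.
def extendByZero {V : Type*} [Zero V] {N : ℕ} (f : Fin N → V) (n : ℕ) : V :=
  if h : n < N then f ⟨n, h⟩ else 0

theorem extendByZero_of_lt {V : Type*} [Zero V] {N : ℕ} (f : Fin N → V) {n : ℕ} (h : n < N) :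
    extendByZero f n = f ⟨n, h⟩ :=
  dif_pos h

theorem hankel_apply {r T : ℕ} (f : Fin T → Fin r → ℝ) (k : ℕ) (ia : Fin (k + 1) × Fin r)
    (j : Fin (T - k)) : hankel f k ia j = extendByZero f (ia.1 + j) ia.2 := by
  rw [extendByZero_of_lt f (by omega)]
  rfl

section Explains

variable {ι : Type*} [Fintype ι] {m p T : ℕ}
  {A : Matrix ι ι ℝ} {B : Matrix ι (Fin m) ℝ} {C : Matrix (Fin p) ι ℝ} {D : Matrix (Fin p) (Fin m) ℝ}
  {u : Fin T → Fin m → ℝ} {y : Fin T → Fin p → ℝ} {x : Fin (T + 1) → ι → ℝ}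

theorem Explains.state_succ (hE : Explains A B C D u y x) (n : ℕ) (hn : n < T) :
    extendByZero x (n + 1) = A *ᵥ extendByZero x n + B *ᵥ extendByZero u n := by
  rw [extendByZero_of_lt x (by omega), extendByZero_of_lt x (by omega), extendByZero_of_lt u hn]
  exact (hE ⟨n, hn⟩).1

theorem Explains.output (hE : Explains A B C D u y x) (n : ℕ) (hn : n < T) :
    extendByZero y n = C *ᵥ extendByZero x n + D *ᵥ extendByZero u n := by
  rw [extendByZero_of_lt y hn, extendByZero_of_lt x (by omega), extendByZero_of_lt u hn]
  exact (hE ⟨n, hn⟩).2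

end Explains

theorem rank_Jmat_of_le {ι : Type*} [Fintype ι] {m T : ℕ} (u : Fin T → Fin m → ℝ)
    (x : Fin (T + 1) → ι → ℝ) {i k : ℕ} (hk : k ≤ i)
    (hfull : (Jmat u x i).rank = Fintype.card ι + (i + 1) * m) :
    (Jmat u x k).rank = Fintype.card ι + (k + 1) * m := by
  have hcard (j : ℕ) :
      Fintype.card (ι ⊕ (Fin (j + 1) × Fin m)) = Fintype.card ι + (j + 1) * m := by
    simp
  rw [← hcard] at hfull ⊢
  have hcols : T - i ≤ T - k := by omega
  have hrows : k + 1 ≤ i + 1 := by omega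
  have hsub : (Jmat u x k).submatrix id (Fin.castLE hcols) =
      (Jmat u x i).submatrix (Sum.map id (Prod.map (Fin.castLE hrows) id)) id := by
    ext (_ | _) _ <;> rfl
  refine Matrix.rank_eq_card_of_rank_submatrix_eq_card _ (Fin.castLE hcols) ?_
  rw [hsub]
  exact Matrix.rank_submatrix_eq_card_of_injective _
    (Function.injective_id.sumMap ((Fin.castLE_injective hrows).prodMap Function.injective_id))
    hfull

section Factorization

variable {ι : Type*} [Fintype ι] [DecidableEq ι] {m p T : ℕ}
  (A : Matrix ι ι ℝ) (B : Matrix ι (Fin m) ℝ) (C : Matrix (Fin p) ι ℝ) (D : Matrix (Fin p) (Fin m) ℝ)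

/- The paper's `Θ_k`, `Φ_k` and `Ψ_k`; `Ψ_k` is `Φ_k` without its last `p` rows, just as `G_k` is
`H_k` without them. -/

def markovToeplitz (k : ℕ) : Matrix (Fin (k + 1) × Fin p) (Fin (k + 1) × Fin m) ℝ :=
  Matrix.of fun ar sl =>
    if (sl.1 : ℕ) ≤ ar.1 then markovParam A B C D (ar.1 - sl.1 : ℕ) ar.2 sl.2 else 0

def phiMat (k : ℕ) :
    Matrix ((Fin (k + 1) × Fin m) ⊕ (Fin (k + 1) × Fin p)) (ι ⊕ (Fin (k + 1) × Fin m)) ℝ :=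
  fromBlocks 0 1 (obsMat A C k) (markovToeplitz A B C D k)

def psiMat (k : ℕ) :
    Matrix ((Fin (k + 1) × Fin m) ⊕ (Fin k × Fin p)) (ι ⊕ (Fin (k + 1) × Fin m)) ℝ :=
  (phiMat A B C D k).submatrix (Sum.map id (Prod.map Fin.castSucc id)) id

theorem markovToeplitz_mul_hankel_apply (u : Fin T → Fin m → ℝ) (k : ℕ) (a : Fin (k + 1))
    (r : Fin p) (t : Fin (T - k)) :
    (markovToeplitz A B C D k * hankel u k) (a, r) t =
      (∑ s ∈ Finset.range (a + 1), markovParam A B C D (a - s) *ᵥ extendByZero u (t + s)) r := by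
  have hinner (s : Fin (k + 1)) : ∑ l, markovToeplitz A B C D k (a, r) (s, l) * hankel u k (s, l) t
      = if (s : ℕ) ≤ a then (markovParam A B C D (a - s) *ᵥ extendByZero u (t + s)) r else 0 := by
    simp only [markovToeplitz, of_apply, hankel_apply]
    split_ifs <;> simp [mulVec, dotProduct, add_comm]
  rw [mul_apply, Fintype.sum_prod_type, Finset.sum_congr rfl fun s _ => hinner s,
    Fin.sum_univ_eq_sum_range (fun s => if s ≤ (a : ℕ) then
      (markovParam A B C D (a - s) *ᵥ extendByZero u (t + s)) r else 0), ← Finset.sum_filter,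
    Finset.sum_apply]
  congr 1
  ext s
  simp only [Finset.mem_filter, Finset.mem_range]
  omega

theorem rank_phiMat (k : ℕ) : (phiMat A B C D k).rank = (k + 1) * m + obsRank A C (k + 1) := by
  rw [phiMat, Matrix.rank_fromBlocks_zero_one, Fintype.card_prod, Fintype.card_fin,
    Fintype.card_fin]
  rfl

theorem rank_psiMat (k : ℕ) : (psiMat A B C D k).rank = (k + 1) * m + obsRank A C k := by
  have hblocks : psiMat A B C D k = fromBlocks 0 1
      ((obsMat A C k).submatrix (Prod.map Fin.castSucc id) id)
      ((markovToeplitz A B C D k).submatrix (Prod.map Fin.castSucc id) id) := by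
    ext (_ | _) (_ | _) <;> rfl
  rw [hblocks, Matrix.rank_fromBlocks_zero_one, Fintype.card_prod, Fintype.card_fin,
    Fintype.card_fin]
  congr 1
  cases k with
  | zero => exact Nat.le_zero.mp ((rank_le_card_height _).trans (by simp))
  | succ j => rfl

variable {A B C D} {u : Fin T → Fin m → ℝ} {y : Fin T → Fin p → ℝ} {x : Fin (T + 1) → ι → ℝ}

theorem Hmat_eq_phiMat_mul_Jmat (hE : Explains A B C D u y x) (k : ℕ) :
    Hmat u y k = phiMat A B C D k * Jmat u x k := by
  rw [phiMat, Jmat, fromBlocks_mul_fromRows, Matrix.zero_mul, Matrix.one_mul, zero_add, Hmat]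
  congr 1
  ext ⟨a, r⟩ t
  rw [Matrix.add_apply, markovToeplitz_mul_hankel_apply, hankel_apply, add_comm (a : ℕ),
    output_eq_sum hE.state_succ hE.output (by omega), extendByZero_of_lt x (by omega)]
  simp [mul_apply, mulVec, dotProduct, obsMat]

theorem Gmat_eq_psiMat_mul_Jmat (hE : Explains A B C D u y x) (k : ℕ) :
    Gmat u y k = psiMat A B C D k * Jmat u x k := by
  have hGH : Gmat u y k = (Hmat u y k).submatrix (Sum.map id (Prod.map Fin.castSucc id)) id := by
    ext (_ | _) _ <;> rfl
  rw [hGH, Hmat_eq_phiMat_mul_Jmat hE, submatrix_mul _ _ _ _ _ Function.bijective_id,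
    submatrix_id_id, psiMat]

end Factorization

theorem stmt9_general {ι : Type*} [Fintype ι] [DecidableEq ι] {m p T : ℕ}
    (A : Matrix ι ι ℝ) (B : Matrix ι (Fin m) ℝ)
    (C : Matrix (Fin p) ι ℝ) (D : Matrix (Fin p) (Fin m) ℝ)
    (u : Fin T → Fin m → ℝ) (y : Fin T → Fin p → ℝ) (x : Fin (T + 1) → ι → ℝ)
    (hE : Explains A B C D u y x)
    (i : ℕ)
    (hfull : (Jmat u x i).rank = Fintype.card ι + (i + 1) * m) :
    ∀ k ≤ i,
      (Jmat u x k).rank = Fintype.card ι + (k + 1) * m ∧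
      (Hmat u y k).rank = (k + 1) * m + obsRank A C (k + 1) ∧
      (Gmat u y k).rank = (k + 1) * m + obsRank A C k := by
  intro k hk
  have hJ := rank_Jmat_of_le u x hk hfull
  have hJ_full : (Jmat u x k).rank = Fintype.card (ι ⊕ (Fin (k + 1) × Fin m)) := by
    simpa using hJ
  refine ⟨hJ, ?_, ?_⟩
  · rw [Hmat_eq_phiMat_mul_Jmat hE, Matrix.rank_mul_eq_left_of_rank_eq_card _ _ hJ_full,
      rank_phiMat]
  · rw [Gmat_eq_psiMat_mul_Jmat hE, Matrix.rank_mul_eq_left_of_rank_eq_card _ _ hJ_full,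
      rank_psiMat]

theorem stmt9 {ι : Type*} [Fintype ι] [DecidableEq ι] {m p T : ℕ}
    (A : Matrix ι ι ℝ) (B : Matrix ι (Fin m) ℝ)
    (C : Matrix (Fin p) ι ℝ) (D : Matrix (Fin p) (Fin m) ℝ)
    (u : Fin T → Fin m → ℝ) (y : Fin T → Fin p → ℝ) (x : Fin (T + 1) → ι → ℝ)
    (hE : Explains A B C D u y x)
    (i : ℕ) (hiT : i ≤ T - 1) (hT : 1 ≤ T)
    (hfull : (Jmat u x i).rank = Fintype.card ι + (i + 1) * m) :
    ∀ k ≤ i,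
      (Jmat u x k).rank = Fintype.card ι + (k + 1) * m ∧
      (Hmat u y k).rank = (k + 1) * m + obsRank A C (k + 1) ∧
      (Gmat u y k).rank = (k + 1) * m + obsRank A C k :=
  stmt9_general A B C D u y x hE i hfull
end
end

section
/- Suppose two observable systems (A_1,B_1,C_1,D_1) and (A_2,B_2,C_2,D_2), both with n states and lag ℓ, explain the same length-T data (u,y) with T ≥ ℓ+1, via states x^1, x^2 respectively, and suppose the state-input matrix J_ℓ(x^1) = [x^1_{[0,T−ℓ−1]}; H_ℓ(u)] has full row rank. Then the two systems are isomorphic: D_1 = D_2 and there is an invertible S ∈ ℝ^{n×n} with A_1 = S^{-1} A_2 S, B_1 = S^{-1} B_2, C_1 = C_2 S. -/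
open Matrix
noncomputable section

/-!
Observability with lag `ℓ` makes the observability matrix `Ω₂` of the second system with `ℓ` block
rows injective, so a left inverse `L` of `Ω₂` reconstructs `x²_t` from the outputs
`y_t, …, y_{t+ℓ-1}`. Comparing with the first system gives `x²_t = S x¹_t + ∑_j G_j u_{t+j}` with
`S = L Ω₁`. Writing `x²_{t+1}` in two ways yields a linear relation between `x¹_t` and
`u_t, …, u_{t+ℓ}`, that is, a row vector annihilating `J_ℓ(x¹)`; full row rank forces
`S A₁ = A₂ S`, `G = 0` and `S B₁ = B₂`, and the output equation then forces `C₁ = C₂ S` and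
`D₁ = D₂`. Finally `Ω₂ S = Ω₁` is injective, so `S` is invertible.
-/

open LinearMap Module

theorem Matrix.eq_zero_of_vecMul_eq_zero_of_rank_eq_card {K : Type*} [Field K] {r c : Type*}
    [Fintype r] [Fintype c] {M : Matrix r c K} (hM : M.rank = Fintype.card r) {v : r → K}
    (hv : v ᵥ* M = 0) : v = 0 := by
  have h := finrank_range_add_finrank_ker Mᵀ.mulVecLin
  rw [← Matrix.rank, Matrix.rank_transpose, hM, finrank_fintype_fun_eq_card,
    Nat.add_eq_left, Submodule.finrank_eq_zero] at h
  have hker : v ∈ ker Mᵀ.mulVecLin := by rwa [mem_ker, mulVecLin_apply, Matrix.mulVec_transpose]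
  rwa [h, Submodule.mem_bot] at hker

theorem Matrix.exists_mul_eq_one_of_ker_mulVecLin_eq_bot {K : Type*} [Field K] {r c : Type*}
    [Fintype r] [Fintype c] [DecidableEq r] [DecidableEq c] {M : Matrix r c K}
    (h : ker M.mulVecLin = ⊥) : ∃ L : Matrix c r K, L * M = 1 := by
  obtain ⟨g, hg⟩ := M.mulVecLin.exists_leftInverse_of_injective h
  refine ⟨LinearMap.toMatrix' g, Matrix.toLin'.injective ?_⟩
  rw [Matrix.toLin'_mul, Matrix.toLin'_toMatrix', Matrix.toLin'_one]
  exact hg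

theorem Matrix.eq_zero_of_eq_mul_succ {R ι κ : Type*} [Semiring R] [Fintype ι] (A : Matrix ι ι R)
    {G : ℕ → Matrix ι κ R} {k : ℕ} (hG : ∀ j, k ≤ j → G j = 0)
    (h : ∀ j < k, G j = A * G (j + 1)) (j : ℕ) : G j = 0 := by
  induction hd : k - j generalizing j with
  | zero => exact hG j (by omega)
  | succ d ih => rw [h j (by omega), ih (j + 1) (by omega), Matrix.mul_zero]

section Observability

variable {ι : Type*} [Fintype ι] [DecidableEq ι] {p : ℕ} (A : Matrix ι ι ℝ) (C : Matrix (Fin p) ι ℝ)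

/-- Unlike `obsMat A C k`, this has `k` block rows `C, CA, …, CA^(k-1)`: `obsMatrix A C (k + 1)`
is `obsMat A C k`, and `obsMatrix A C 0` is empty, matching the indexing of `obsRank`. -/
def obsMatrix (k : ℕ) : Matrix (Fin k × Fin p) ι ℝ :=
  Matrix.of fun ir j => (C * A ^ (ir.1 : ℕ)) ir.2 j

def obsKer (k : ℕ) : Submodule ℝ (ι → ℝ) := ker (obsMatrix A C k).mulVecLin

variable {A C}

theorem mem_obsKer {k : ℕ} {v : ι → ℝ} :
    v ∈ obsKer A C k ↔ ∀ i < k, (C * A ^ i) *ᵥ v = 0 := by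
  simp only [obsKer, mem_ker, mulVecLin_apply, funext_iff, Prod.forall, Fin.forall_iff]
  rfl

theorem mem_obsKer_succ {k : ℕ} {v : ι → ℝ} :
    v ∈ obsKer A C (k + 1) ↔ C *ᵥ v = 0 ∧ A *ᵥ v ∈ obsKer A C k := by
  simp only [mem_obsKer, Nat.forall_lt_succ_left, Matrix.mulVec_mulVec, pow_zero, Matrix.mul_one,
    pow_succ, Matrix.mul_assoc]

theorem obsKer_succ_le (k : ℕ) : obsKer A C (k + 1) ≤ obsKer A C k := fun _ hv =>
  mem_obsKer.2 fun i hi => mem_obsKer.1 hv i (by omega)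

theorem obsKer_succ_succ_eq {k : ℕ} (h : obsKer A C (k + 1) = obsKer A C k) :
    obsKer A C (k + 2) = obsKer A C (k + 1) := by
  simp only [SetLike.ext_iff, mem_obsKer_succ] at h ⊢
  exact fun v => and_congr_right' (h _)

theorem obsKer_eq_of_le {k j : ℕ} (h : obsKer A C (k + 1) = obsKer A C k) (hkj : k ≤ j) :
    obsKer A C j = obsKer A C k := by
  have hstep : ∀ j, k ≤ j → obsKer A C (j + 1) = obsKer A C j :=
    Nat.le_induction h fun _ _ ih => obsKer_succ_succ_eq ih
  induction j, hkj using Nat.le_induction with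
  | base => rfl
  | succ j hkj ih => rw [hstep j hkj, ih]

theorem obsRank_eq_rank (k : ℕ) : obsRank A C k = (obsMatrix A C k).rank := by
  cases k with
  | zero => exact (Nat.le_zero.1 ((obsMatrix A C 0).rank_le_card_height.trans_eq (by simp))).symm
  | succ k => rfl

theorem obsRank_add_finrank_obsKer (k : ℕ) :
    obsRank A C k + finrank ℝ (obsKer A C k) = Fintype.card ι := by
  rw [obsRank_eq_rank, Matrix.rank, obsKer, finrank_range_add_finrank_ker,
    finrank_fintype_fun_eq_card]

theorem obsKer_eq_bot_iff {k : ℕ} : obsKer A C k = ⊥ ↔ obsRank A C k = Fintype.card ι := by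
  rw [← Submodule.finrank_eq_zero]
  have := obsRank_add_finrank_obsKer (A := A) (C := C) k
  omega

theorem obsKer_succ_eq_iff {k : ℕ} :
    obsKer A C (k + 1) = obsKer A C k ↔ obsRank A C (k + 1) = obsRank A C k := by
  have h₀ := obsRank_add_finrank_obsKer (A := A) (C := C) k
  have h₁ := obsRank_add_finrank_obsKer (A := A) (C := C) (k + 1)
  refine ⟨fun h => ?_, fun h => Submodule.eq_of_le_of_finrank_eq (obsKer_succ_le k) ?_⟩
  · rw [h] at h₁
    omega
  · omega

/-- The lag is at most the state dimension, and the kernels are constant from the lag on. -/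
theorem Observable.obsKer_lag_eq_bot (h : Observable A C) : obsKer A C (lag A C) = ⊥ := by
  have hn : obsKer A C (Fintype.card ι) = ⊥ := obsKer_eq_bot_iff.2 h
  have hmem : Fintype.card ι ∈ {k | obsRank A C (k + 1) = obsRank A C k} :=
    obsKer_succ_eq_iff.1 <| by rw [hn]; exact eq_bot_iff.2 (hn ▸ obsKer_succ_le _)
  have hlag : obsKer A C (lag A C + 1) = obsKer A C (lag A C) :=
    obsKer_succ_eq_iff.2 (Nat.sInf_mem ⟨_, hmem⟩)
  rw [← obsKer_eq_of_le hlag (Nat.sInf_le hmem), hn]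

theorem isUnit_of_semiconjBy_of_obsKer_eq_bot {k : ℕ} {A₂ S : Matrix ι ι ℝ}
    {C₂ : Matrix (Fin p) ι ℝ} (hA : S * A = A₂ * S) (hC : C = C₂ * S) (hK : obsKer A C k = ⊥) :
    IsUnit S := by
  rw [← Matrix.mulVec_injective_iff_isUnit, ← Matrix.coe_mulVecLin, ← ker_eq_bot,
    Matrix.ker_mulVecLin_eq_bot_iff]
  intro v hv
  rw [← Submodule.mem_bot ℝ, ← hK, mem_obsKer]
  intro i _
  rw [hC, Matrix.mul_assoc, (SemiconjBy.pow_right hA i).eq, ← Matrix.mul_assoc,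
    ← Matrix.mulVec_mulVec, hv, Matrix.mulVec_zero]

end Observability

/-- Extension by zero of a signal on `Fin T` to all times, so that time shifts are additions
in `ℕ`. -/
def pad {T : ℕ} {α : Type*} [Zero α] (f : Fin T → α) (t : ℕ) : α :=
  if h : t < T then f ⟨t, h⟩ else 0

theorem pad_of_lt {T : ℕ} {α : Type*} [Zero α] (f : Fin T → α) {t : ℕ} (h : t < T) :
    pad f t = f ⟨t, h⟩ := dif_pos h

section Trajectory

variable {ι : Type*} [Fintype ι] {m p T : ℕ}
  {A : Matrix ι ι ℝ} {B : Matrix ι (Fin m) ℝ} {C : Matrix (Fin p) ι ℝ}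
  {D : Matrix (Fin p) (Fin m) ℝ}
  {u : Fin T → Fin m → ℝ} {y : Fin T → Fin p → ℝ} {x : Fin (T + 1) → ι → ℝ}

theorem Explains.pad_succ (hE : Explains A B C D u y x) {t : ℕ} (ht : t < T) :
    pad x (t + 1) = A *ᵥ pad x t + B *ᵥ pad u t := by
  rw [pad_of_lt x (by omega), pad_of_lt x (by omega), pad_of_lt u ht]
  exact (hE ⟨t, ht⟩).1

theorem Explains.pad_output (hE : Explains A B C D u y x) {t : ℕ} (ht : t < T) :
    pad y t = C *ᵥ pad x t + D *ᵥ pad u t := by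
  rw [pad_of_lt y ht, pad_of_lt x (by omega), pad_of_lt u ht]
  exact (hE ⟨t, ht⟩).2

theorem eq_zero_of_rank_Jmat {L : ℕ} (hJ : (Jmat u x L).rank = Fintype.card ι + (L + 1) * m)
    {ρ : Type*} (M : Matrix ρ ι ℝ) (N : ℕ → Matrix ρ (Fin m) ℝ)
    (h : ∀ t, t + L < T →
      M *ᵥ pad x t + ∑ k ∈ Finset.range (L + 1), N k *ᵥ pad u (t + k) = 0) :
    M = 0 ∧ ∀ k ≤ L, N k = 0 := by
  have hrow (r : ρ) : Sum.elim (M r) (fun kc : Fin (L + 1) × Fin m => N kc.1 r kc.2) = 0 := by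
    refine Matrix.eq_zero_of_vecMul_eq_zero_of_rank_eq_card (by simpa using hJ)
      (funext fun j => ?_)
    have hj := congrFun (h j (by omega)) r
    rw [Pi.zero_apply] at hj
    rw [Pi.zero_apply, ← hj]
    simp only [Matrix.vecMul, dotProduct, Fintype.sum_sum_type, Jmat, Matrix.fromRows_apply_inl,
      Matrix.fromRows_apply_inr, Sum.elim_inl, Sum.elim_inr, hankel, Matrix.of_apply,
      Pi.add_apply, Finset.sum_apply, Matrix.mulVec, Fintype.sum_prod_type]
    rw [← Fin.sum_univ_eq_sum_range (fun k => ∑ c, N k r c * pad u (j + k) c)]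
    congr 1
    · exact Finset.sum_congr rfl fun i _ => by rw [pad_of_lt x (by omega)]
    · refine Finset.sum_congr rfl fun k _ => Finset.sum_congr rfl fun c _ => ?_
      rw [add_comm (j : ℕ), pad_of_lt u (by omega)]
  refine ⟨funext fun r => funext fun i => congrFun (hrow r) (Sum.inl i), fun k hk => ?_⟩
  ext r c
  exact congrFun (hrow r) (Sum.inr (⟨k, by omega⟩, c))

variable [DecidableEq ι]

variable (A B C D) in
def markov : ℕ → Matrix (Fin p) (Fin m) ℝ
  | 0 => D
  | k + 1 => C * A ^ k * B

variable (A B C D) in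
/-- The `j`-th block column of the lower triangular block Toeplitz matrix of Markov parameters
with `k` block rows. -/
def toeplitzCol (k j : ℕ) : Matrix (Fin k × Fin p) (Fin m) ℝ :=
  Matrix.of fun ir c => if j ≤ (ir.1 : ℕ) then markov A B C D (ir.1 - j) ir.2 c else 0

theorem toeplitzCol_eq_zero_of_le {k j : ℕ} (h : k ≤ j) : toeplitzCol A B C D k j = 0 := by
  ext ⟨i, r⟩ c
  simp [toeplitzCol, show ¬j ≤ (i : ℕ) by omega]

theorem Explains.pad_state_add (hE : Explains A B C D u y x) (t : ℕ) {i : ℕ} (hi : t + i ≤ T) :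
    pad x (t + i) = (A ^ i) *ᵥ pad x t +
      ∑ j ∈ Finset.range i, (A ^ (i - 1 - j) * B) *ᵥ pad u (t + j) := by
  induction i with
  | zero => simp
  | succ i ih =>
    rw [← add_assoc, hE.pad_succ (by omega), ih (by omega), Matrix.mulVec_add,
      Matrix.mulVec_mulVec, ← pow_succ', Matrix.mulVec_sum, Finset.sum_range_succ,
      Nat.add_sub_cancel, Nat.sub_self, pow_zero, Matrix.one_mul, add_assoc]
    congr 2
    refine Finset.sum_congr rfl fun j hj => ?_
    rw [Matrix.mulVec_mulVec, ← Matrix.mul_assoc, ← pow_succ']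
    have := Finset.mem_range.1 hj
    congr 4
    omega

theorem Explains.pad_output_add (hE : Explains A B C D u y x) (t : ℕ) {i : ℕ} (hi : t + i < T) :
    pad y (t + i) = (C * A ^ i) *ᵥ pad x t +
      ∑ j ∈ Finset.range (i + 1), markov A B C D (i - j) *ᵥ pad u (t + j) := by
  rw [hE.pad_output hi, hE.pad_state_add t hi.le, Matrix.mulVec_add, Matrix.mulVec_mulVec,
    Matrix.mulVec_sum, Finset.sum_range_succ, Nat.sub_self, add_assoc]
  congr 2
  refine Finset.sum_congr rfl fun j hj => ?_
  obtain ⟨k, hk⟩ : ∃ k, i - j = k + 1 := ⟨i - 1 - j, by have := Finset.mem_range.1 hj; omega⟩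
  rw [hk, markov, Matrix.mulVec_mulVec, ← Matrix.mul_assoc, show i - 1 - j = k by omega]

theorem Explains.output_window (hE : Explains A B C D u y x) {t k : ℕ} (hk : t + k ≤ T) :
    (fun ir : Fin k × Fin p => pad y (t + ir.1) ir.2) = obsMatrix A C k *ᵥ pad x t +
      ∑ j ∈ Finset.range k, toeplitzCol A B C D k j *ᵥ pad u (t + j) := by
  funext ⟨i, r⟩
  have hsub : Finset.range (i + 1) ⊆ Finset.range k := Finset.range_subset_range.2 i.isLt
  simp only [Pi.add_apply, Finset.sum_apply]
  rw [hE.pad_output_add t (by omega), ← Finset.sum_subset hsub]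
  · simp only [Pi.add_apply, Finset.sum_apply]
    refine congrArg₂ (· + ·) rfl (Finset.sum_congr rfl fun j hj => ?_)
    rw [Finset.mem_range, Nat.lt_succ_iff] at hj
    simp [toeplitzCol, Matrix.mulVec, dotProduct, hj]
  · intro j _ hj
    rw [Finset.mem_range, Nat.lt_succ_iff, not_le] at hj
    simp [toeplitzCol, Matrix.mulVec, dotProduct, hj.not_ge]

end Trajectory

section TwoRealizations

variable {ι₁ ι₂ : Type*} [Fintype ι₁] [Fintype ι₂] {m p T : ℕ}
  {A₁ : Matrix ι₁ ι₁ ℝ} {B₁ : Matrix ι₁ (Fin m) ℝ} {C₁ : Matrix (Fin p) ι₁ ℝ}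
  {A₂ : Matrix ι₂ ι₂ ℝ} {B₂ : Matrix ι₂ (Fin m) ℝ} {C₂ : Matrix (Fin p) ι₂ ℝ}
  {D₁ D₂ : Matrix (Fin p) (Fin m) ℝ}
  {u : Fin T → Fin m → ℝ} {y : Fin T → Fin p → ℝ}
  {x₁ : Fin (T + 1) → ι₁ → ℝ} {x₂ : Fin (T + 1) → ι₂ → ℝ}

/-- Both expressions for `x²_{t+1}` combine into a relation `M x¹_t + ∑ Q_i u_{t+i} = 0`, killed
by `eq_zero_of_rank_Jmat`; the coefficient of `u_{t+j+1}` gives `G j = A₂ G (j+1)`. -/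
theorem Explains.intertwining_of_pad_state_eq (hE₁ : Explains A₁ B₁ C₁ D₁ u y x₁)
    (hE₂ : Explains A₂ B₂ C₂ D₂ u y x₂) {k : ℕ}
    (hJ : (Jmat u x₁ k).rank = Fintype.card ι₁ + (k + 1) * m) {S : Matrix ι₂ ι₁ ℝ}
    {G : ℕ → Matrix ι₂ (Fin m) ℝ} (hG : ∀ j, k ≤ j → G j = 0)
    (hx : ∀ t, t + k ≤ T →
      pad x₂ t = S *ᵥ pad x₁ t + ∑ j ∈ Finset.range k, G j *ᵥ pad u (t + j)) :
    S * A₁ = A₂ * S ∧ S * B₁ = B₂ ∧ ∀ j, G j = 0 := by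
  set Q : ℕ → Matrix ι₂ (Fin m) ℝ :=
    fun i => (if i = 0 then S * B₁ - B₂ else G (i - 1)) - A₂ * G i
  have hrel : ∀ t, t + k < T →
      (S * A₁ - A₂ * S) *ᵥ pad x₁ t + ∑ i ∈ Finset.range (k + 1), Q i *ᵥ pad u (t + i) = 0 := by
    intro t ht
    have h₁ := hx (t + 1) (by omega)
    rw [hE₁.pad_succ (by omega)] at h₁
    have h₂ := hE₂.pad_succ (t := t) (by omega)
    rw [hx t (by omega)] at h₂
    have hsum : ∑ i ∈ Finset.range (k + 1), Q i *ᵥ pad u (t + i) = (S * B₁ - B₂) *ᵥ pad u t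
        + ∑ j ∈ Finset.range k, G j *ᵥ pad u (t + 1 + j)
        - A₂ *ᵥ ∑ j ∈ Finset.range k, G j *ᵥ pad u (t + j) := by
      simp only [Q, Matrix.sub_mulVec, Finset.sum_sub_distrib]
      rw [Finset.sum_range_succ', Finset.sum_range_succ (fun i => (A₂ * G i) *ᵥ _), hG k le_rfl,
        Matrix.mulVec_sum]
      simp only [Nat.add_one_ne_zero, if_false, if_true, Nat.add_sub_cancel, Matrix.mul_zero,
        Matrix.zero_mulVec, add_zero, Matrix.mulVec_mulVec, Matrix.sub_mulVec, add_assoc,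
        Nat.add_comm 1]
      abel
    rw [hsum, ← sub_eq_zero.2 (h₁.symm.trans h₂)]
    simp only [Matrix.sub_mulVec, ← Matrix.mulVec_mulVec, Matrix.mulVec_add]
    abel
  obtain ⟨hM, hN⟩ := eq_zero_of_rank_Jmat hJ _ Q hrel
  have hG₀ : ∀ j, G j = 0 := Matrix.eq_zero_of_eq_mul_succ A₂ hG fun j hj =>
    sub_eq_zero.1 (by simpa [Q] using hN (j + 1) hj)
  refine ⟨sub_eq_zero.1 hM, sub_eq_zero.1 ?_, hG₀⟩
  simpa [Q, hG₀] using hN 0 (Nat.zero_le k)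

theorem Explains.output_eq_of_pad_state_eq (hE₁ : Explains A₁ B₁ C₁ D₁ u y x₁)
    (hE₂ : Explains A₂ B₂ C₂ D₂ u y x₂) {k : ℕ}
    (hJ : (Jmat u x₁ k).rank = Fintype.card ι₁ + (k + 1) * m) {S : Matrix ι₂ ι₁ ℝ}
    (hx : ∀ t, t + k ≤ T → pad x₂ t = S *ᵥ pad x₁ t) : C₁ = C₂ * S ∧ D₁ = D₂ := by
  have hrel : ∀ t, t + k < T → (C₁ - C₂ * S) *ᵥ pad x₁ t +
      ∑ i ∈ Finset.range (k + 1), (if i = 0 then D₁ - D₂ else 0) *ᵥ pad u (t + i) = 0 := by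
    intro t ht
    have h := (hE₁.pad_output (t := t) (by omega)).symm.trans (hE₂.pad_output (by omega))
    rw [hx t (by omega), Matrix.mulVec_mulVec] at h
    rw [Finset.sum_range_succ']
    simp only [Nat.add_one_ne_zero, if_false, if_true, Matrix.zero_mulVec, Finset.sum_const_zero,
      zero_add, add_zero, Matrix.sub_mulVec]
    rw [← sub_eq_zero.2 h]
    abel
  obtain ⟨hM, hN⟩ := eq_zero_of_rank_Jmat hJ _ _ hrel
  exact ⟨sub_eq_zero.1 hM, sub_eq_zero.1 (by simpa using hN 0 (Nat.zero_le k))⟩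

variable [DecidableEq ι₁] [DecidableEq ι₂]

theorem Explains.pad_state_eq_of_mul_obsMatrix_eq_one (hE₁ : Explains A₁ B₁ C₁ D₁ u y x₁)
    (hE₂ : Explains A₂ B₂ C₂ D₂ u y x₂) {k : ℕ} {L : Matrix ι₂ (Fin k × Fin p) ℝ}
    (hL : L * obsMatrix A₂ C₂ k = 1) {t : ℕ} (ht : t + k ≤ T) :
    pad x₂ t = (L * obsMatrix A₁ C₁ k) *ᵥ pad x₁ t + ∑ j ∈ Finset.range k,
      (L * (toeplitzCol A₁ B₁ C₁ D₁ k j - toeplitzCol A₂ B₂ C₂ D₂ k j)) *ᵥ pad u (t + j) := by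
  have hw := (hE₂.output_window ht).symm.trans (hE₁.output_window ht)
  rw [← eq_sub_iff_add_eq, add_sub_assoc, ← Finset.sum_sub_distrib] at hw
  calc pad x₂ t = L *ᵥ (obsMatrix A₂ C₂ k *ᵥ pad x₂ t) := by
        rw [Matrix.mulVec_mulVec, hL, Matrix.one_mulVec]
    _ = _ := by
        simp only [hw, Matrix.mulVec_add, Matrix.mulVec_sum, Matrix.mulVec_sub,
          Matrix.mulVec_mulVec, Matrix.mul_sub, Matrix.sub_mulVec]

end TwoRealizations

theorem stmt13_general {n m p T ℓ : ℕ}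
    (A₁ A₂ : Matrix (Fin n) (Fin n) ℝ) (B₁ B₂ : Matrix (Fin n) (Fin m) ℝ)
    (C₁ C₂ : Matrix (Fin p) (Fin n) ℝ) (D₁ D₂ : Matrix (Fin p) (Fin m) ℝ)
    (u : Fin T → Fin m → ℝ) (y : Fin T → Fin p → ℝ)
    (x₁ x₂ : Fin (T + 1) → Fin n → ℝ)
    (hE1 : Explains A₁ B₁ C₁ D₁ u y x₁) (hE2 : Explains A₂ B₂ C₂ D₂ u y x₂)
    (hobs1 : Observable A₁ C₁) (hobs2 : Observable A₂ C₂)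
    (hl1 : lag A₁ C₁ = ℓ) (hl2 : lag A₂ C₂ = ℓ)
    (hfull : (Jmat u x₁ ℓ).rank = n + (ℓ + 1) * m) :
    D₁ = D₂ ∧ ∃ S : Matrix (Fin n) (Fin n) ℝ, IsUnit S ∧
      A₁ = S⁻¹ * A₂ * S ∧ B₁ = S⁻¹ * B₂ ∧ C₁ = C₂ * S := by
  obtain ⟨L, hL⟩ :=
    Matrix.exists_mul_eq_one_of_ker_mulVecLin_eq_bot (hl2 ▸ hobs2.obsKer_lag_eq_bot)
  have hJ : (Jmat u x₁ ℓ).rank = Fintype.card (Fin n) + (ℓ + 1) * m := by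
    rwa [Fintype.card_fin]
  have hx := fun t (ht : t + ℓ ≤ T) => hE1.pad_state_eq_of_mul_obsMatrix_eq_one hE2 hL ht
  obtain ⟨hA, hB, hG⟩ := hE1.intertwining_of_pad_state_eq hE2 hJ
    (fun j hj => by simp [toeplitzCol_eq_zero_of_le hj]) hx
  set S := L * obsMatrix A₁ C₁ ℓ
  obtain ⟨hC, hD⟩ := hE1.output_eq_of_pad_state_eq hE2 hJ (S := S) fun t ht => by
    simpa [hG] using hx t ht
  have hS : IsUnit S :=
    isUnit_of_semiconjBy_of_obsKer_eq_bot hA hC (hl1 ▸ hobs1.obsKer_lag_eq_bot)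
  have hdet := (Matrix.isUnit_iff_isUnit_det S).1 hS
  refine ⟨hD, S, hS, ?_, ?_, hC⟩
  · rw [Matrix.mul_assoc, ← hA, Matrix.nonsing_inv_mul_cancel_left _ _ hdet]
  · rw [← hB, Matrix.nonsing_inv_mul_cancel_left _ _ hdet]

theorem stmt13 {n m p T ℓ : ℕ}
    (A₁ A₂ : Matrix (Fin n) (Fin n) ℝ) (B₁ B₂ : Matrix (Fin n) (Fin m) ℝ)
    (C₁ C₂ : Matrix (Fin p) (Fin n) ℝ) (D₁ D₂ : Matrix (Fin p) (Fin m) ℝ)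
    (u : Fin T → Fin m → ℝ) (y : Fin T → Fin p → ℝ)
    (x₁ x₂ : Fin (T + 1) → Fin n → ℝ)
    (hE1 : Explains A₁ B₁ C₁ D₁ u y x₁) (hE2 : Explains A₂ B₂ C₂ D₂ u y x₂)
    (hobs1 : Observable A₁ C₁) (hobs2 : Observable A₂ C₂)
    (hl1 : lag A₁ C₁ = ℓ) (hl2 : lag A₂ C₂ = ℓ)
    (hT : ℓ + 1 ≤ T)
    (hfull : (Jmat u x₁ ℓ).rank = n + (ℓ + 1) * m) :
    D₁ = D₂ ∧ ∃ S : Matrix (Fin n) (Fin n) ℝ, IsUnit S ∧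
      A₁ = S⁻¹ * A₂ * S ∧ B₁ = S⁻¹ * B₂ ∧ C₁ = C₂ * S :=
  stmt13_general A₁ A₂ B₁ B₂ C₁ C₂ D₁ D₂ u y x₁ x₂ hE1 hE2 hobs1 hobs2 hl1 hl2 hfull
end
end

section
/- Suppose an explaining system with lag ℓ and state dimension n exists with ℓ ≥ q (q = min{k : δ_k = 0}). Then n − Σ_{i=0}^{q} δ_i ≥ ℓ − q. In particular, any explaining system satisfies ℓ ≤ n − n_min + ℓ_min where ℓ_min = q and n_min = Σ_{i=0}^{q} δ_i. -/
open Matrix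
noncomputable section

/-
The heart of the argument is `δ_k ≤ ρ_k`. Iterating the state equation, `y_{t+i}` is `C A^i x_t`
plus a linear combination of `u_t, …, u_{t+i}`. So, modulo the row space `U` of the input block,
the output rows of `H_k` (resp. `G_k`) span the image of the row space of `Ω_k` (resp. `Ω_{k-1}`)
under the linear map `v ↦ (v ⬝ x_t)_t`, and the `p` extra rows of `H_k` raise the rank by at most
`rank Ω_k - rank Ω_{k-1} = ρ_k`. Telescoping, `∑_{i ≤ q} δ_i = ∑_{i < q} δ_i ≤ rank Ω_{q-1}`, and
since `ρ_k ≥ 1` for `k < ℓ`, `rank Ω_{q-1} + (ℓ - q) ≤ rank Ω_{ℓ-1} ≤ n`.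
-/

open Submodule Module Finset

section LinearAlgebra

variable {K V W : Type*} [DivisionRing K] [AddCommGroup V] [Module K V]
  [AddCommGroup W] [Module K W]

theorem Matrix.span_range_fromRows {α α' β : Type*} (M : Matrix α β K) (N : Matrix α' β K) :
    span K (Set.range (fromRows M N).row) = span K (Set.range M.row) ⊔ span K (Set.range N.row) :=
  (congrArg (span K) (Set.Sum.elim_range M N)).trans (span_union _ _)

theorem sup_span_range_le_of_sub_mem {ι : Type*} {S : Submodule K W} {g g' : ι → W}
    (h : ∀ i, g i - g' i ∈ S) : S ⊔ span K (Set.range g) ≤ S ⊔ span K (Set.range g') := by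
  refine sup_le le_sup_left (span_le.mpr ?_)
  rintro _ ⟨i, rfl⟩
  have hg : g' i ∈ span K (Set.range g') := subset_span ⟨i, rfl⟩
  simpa using add_mem (mem_sup_left (h i)) (mem_sup_right hg)

theorem sup_span_range_eq_of_sub_mem {ι : Type*} {S : Submodule K W} {g g' : ι → W}
    (h : ∀ i, g i - g' i ∈ S) : S ⊔ span K (Set.range g) = S ⊔ span K (Set.range g') :=
  le_antisymm (sup_span_range_le_of_sub_mem h)
    (sup_span_range_le_of_sub_mem fun i => by simpa using neg_mem (h i))

theorem finrank_sup_map_add_le [FiniteDimensional K V] [FiniteDimensional K W]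
    (f : V →ₗ[K] W) (S : Submodule K W) {W₁ W₂ : Submodule K V} (h : W₁ ≤ W₂) :
    finrank K ↥(S ⊔ W₂.map f) + finrank K W₁
      ≤ finrank K ↥(S ⊔ W₁.map f) + finrank K W₂ := by
  obtain ⟨Wc, hWc⟩ := Submodule.exists_isCompl W₁
  set W' := Wc ⊓ W₂
  have hsup : W₁ ⊔ W' = W₂ := by
    rw [← sup_inf_assoc_of_le _ h, hWc.sup_eq_top, top_inf_eq]
  have hdim : finrank K W₁ + finrank K W' = finrank K W₂ := by
    have := finrank_sup_add_finrank_inf_eq W₁ W'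
    rwa [hsup, (hWc.disjoint.mono_right inf_le_left).eq_bot, finrank_bot, add_zero, eq_comm] at this
  have hsplit : S ⊔ W₂.map f = (S ⊔ W₁.map f) ⊔ W'.map f := by
    rw [sup_assoc, ← Submodule.map_sup, hsup]
  have := finrank_add_le_finrank_add_finrank (S ⊔ W₁.map f) (W'.map f)
  have := finrank_map_le f W'
  rw [hsplit]
  omega

end LinearAlgebra

section Observability

variable {ι : Type*} [Fintype ι] [DecidableEq ι] {p : ℕ}
  (A : Matrix ι ι ℝ) (C : Matrix (Fin p) ι ℝ)

/-- The row space of `Ω_{k-1}`. -/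
def obsSpan (k : ℕ) : Submodule ℝ (ι → ℝ) :=
  span ℝ (Set.range fun ia : Fin k × Fin p => (C * A ^ (ia.1 : ℕ)) ia.2)

theorem obsRank_eq_finrank_obsSpan : ∀ k, obsRank A C k = finrank ℝ (obsSpan A C k)
  | 0 => by
    rw [obsSpan, Set.range_eq_empty, span_empty, finrank_bot]
    rfl
  | k + 1 => (obsMat A C k).rank_eq_finrank_span_row

theorem obsSpan_mono : Monotone (obsSpan A C) := fun _ _ h =>
  span_mono <| by
    rintro _ ⟨⟨i, a⟩, rfl⟩
    exact ⟨(Fin.castLE (by omega) i, a), rfl⟩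

theorem obsRank_mono : Monotone (obsRank A C) := fun k l h => by
  simpa only [obsRank_eq_finrank_obsSpan] using finrank_mono (obsSpan_mono A C h)

theorem obsRank_le_card (k : ℕ) : obsRank A C k ≤ Fintype.card ι := by
  simpa [obsRank_eq_finrank_obsSpan] using finrank_le (obsSpan A C k)

theorem sum_range_rho (r : ℕ) : ∑ i ∈ range r, rho A C i = obsRank A C r :=
  sum_range_tsub (obsRank_mono A C) r

theorem one_le_rho_of_lt_lag {k : ℕ} (hk : k < lag A C) : 1 ≤ rho A C k := by
  have hne : obsRank A C (k + 1) ≠ obsRank A C k :=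
    Nat.notMem_of_lt_sInf (s := {k | obsRank A C (k + 1) = obsRank A C k}) hk
  have := obsRank_mono A C (by omega : k ≤ k + 1)
  unfold rho
  omega

theorem obsRank_add_le_of_le_lag {k d : ℕ} (h : k + d ≤ lag A C) :
    obsRank A C k + d ≤ obsRank A C (k + d) := by
  induction d with
  | zero => rfl
  | succ d ih =>
    have := one_le_rho_of_lt_lag A C (k := k + d) (by omega)
    have := ih (by omega)
    show obsRank A C k + (d + 1) ≤ obsRank A C (k + d + 1)
    unfold rho at *
    omega

theorem obsRank_add_lag_sub_le_card (k : ℕ) :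
    obsRank A C k + (lag A C - k) ≤ Fintype.card ι := by
  rcases le_or_gt k (lag A C) with hk | hk
  · obtain ⟨d, hd⟩ := Nat.exists_eq_add_of_le hk
    have := obsRank_add_le_of_le_lag A C hd.ge
    have := obsRank_le_card A C (k + d)
    omega
  · simpa [Nat.sub_eq_zero_of_le hk.le] using obsRank_le_card A C k

end Observability

section Data

variable {ι : Type*} [Fintype ι] {m p T : ℕ}
  {A : Matrix ι ι ℝ} {B : Matrix ι (Fin m) ℝ}
  {C : Matrix (Fin p) ι ℝ} {D : Matrix (Fin p) (Fin m) ℝ}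
  {u : Fin T → Fin m → ℝ} {y : Fin T → Fin p → ℝ} {x : Fin (T + 1) → ι → ℝ}

def stateMat (x : Fin (T + 1) → ι → ℝ) (k : ℕ) : Matrix ι (Fin (T - k)) ℝ :=
  Matrix.of fun c j => x ⟨j, by have := j.isLt; omega⟩ c

theorem vecMul_stateMat (x : Fin (T + 1) → ι → ℝ) (k : ℕ) (v : ι → ℝ) :
    v ᵥ* stateMat x k = fun j : Fin (T - k) => v ⬝ᵥ x ⟨j, by have := j.isLt; omega⟩ :=
  rfl

theorem dataRow_mem_span_hankel {r : ℕ} (f : Fin T → Fin r → ℝ) {k i : ℕ} (hi : i ≤ k)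
    (v : Fin r → ℝ) :
    (fun j : Fin (T - k) => v ⬝ᵥ f ⟨i + j, by have := j.isLt; omega⟩)
      ∈ span ℝ (Set.range (hankel f k)) := by
  have hsum : (fun j : Fin (T - k) => v ⬝ᵥ f ⟨i + j, by have := j.isLt; omega⟩)
      = ∑ b, v b • hankel f k (⟨i, by omega⟩, b) := by
    ext j
    simp [dotProduct, hankel, Finset.sum_apply]
  rw [hsum]
  exact sum_mem fun b _ => smul_mem _ _ (subset_span ⟨_, rfl⟩)

theorem stateRow_sub_mem_span_hankel [DecidableEq ι] (hE : Explains A B C D u y x) {k i : ℕ}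
    (hi : i ≤ k) (w : ι → ℝ) :
    (fun j : Fin (T - k) => w ⬝ᵥ x ⟨i + j, by have := j.isLt; omega⟩)
      - (w ᵥ* A ^ i) ᵥ* stateMat x k ∈ span ℝ (Set.range (hankel u k)) := by
  induction i generalizing w with
  | zero =>
    simp only [zero_add, pow_zero, vecMul_one]
    rw [vecMul_stateMat, sub_self]
    exact zero_mem _
  | succ i ih =>
    have hrow : (fun j : Fin (T - k) => w ⬝ᵥ x ⟨i + 1 + j, by have := j.isLt; omega⟩)
          - (w ᵥ* A ^ (i + 1)) ᵥ* stateMat x k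
        = ((fun j : Fin (T - k) => (w ᵥ* A) ⬝ᵥ x ⟨i + j, by have := j.isLt; omega⟩)
            - ((w ᵥ* A) ᵥ* A ^ i) ᵥ* stateMat x k)
          + fun j : Fin (T - k) => (w ᵥ* B) ⬝ᵥ u ⟨i + j, by have := j.isLt; omega⟩ := by
      ext j
      have hx : x ⟨i + 1 + j, by have := j.isLt; omega⟩
          = A *ᵥ x ⟨i + j, by have := j.isLt; omega⟩
            + B *ᵥ u ⟨i + j, by have := j.isLt; omega⟩ := by
        convert (hE ⟨i + j, by have := j.isLt; omega⟩).1 using 2 <;>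
          simp only [Fin.succ_mk, Fin.castSucc_mk, Fin.mk.injEq]
        omega
      simp only [Pi.sub_apply, Pi.add_apply, vecMul_stateMat]
      rw [hx, dotProduct_add, dotProduct_mulVec, dotProduct_mulVec, vecMul_vecMul, ← pow_succ']
      ring
    rw [hrow]
    exact add_mem (ih (by omega) _) (dataRow_mem_span_hankel u (by omega) _)

theorem outputRow_sub_mem_span_hankel [DecidableEq ι] (hE : Explains A B C D u y x) {k i : ℕ}
    (hi : i ≤ k) (a : Fin p) :
    (fun j : Fin (T - k) => y ⟨i + j, by have := j.isLt; omega⟩ a)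
      - (C * A ^ i) a ᵥ* stateMat x k ∈ span ℝ (Set.range (hankel u k)) := by
  have hrow : (fun j : Fin (T - k) => y ⟨i + j, by have := j.isLt; omega⟩ a)
        - (C * A ^ i) a ᵥ* stateMat x k
      = ((fun j : Fin (T - k) => C a ⬝ᵥ x ⟨i + j, by have := j.isLt; omega⟩)
          - (C a ᵥ* A ^ i) ᵥ* stateMat x k)
        + fun j : Fin (T - k) => D a ⬝ᵥ u ⟨i + j, by have := j.isLt; omega⟩ := by
    ext j
    simp only [Pi.sub_apply, Pi.add_apply, (hE ⟨i + j, _⟩).2, mul_apply_eq_vecMul,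
      Fin.castSucc_mk, mulVec]
    ring
  rw [hrow]
  exact add_mem (stateRow_sub_mem_span_hankel hE hi _) (dataRow_mem_span_hankel u hi _)

theorem sup_span_outputRows_eq [DecidableEq ι] (hE : Explains A B C D u y x) {k l : ℕ}
    (hl : l ≤ k + 1) (Y : Matrix (Fin l × Fin p) (Fin (T - k)) ℝ)
    (hY : ∀ ia j, Y ia j = y ⟨ia.1 + j, by have := ia.1.isLt; have := j.isLt; omega⟩ ia.2) :
    span ℝ (Set.range (hankel u k)) ⊔ span ℝ (Set.range Y)
      = span ℝ (Set.range (hankel u k)) ⊔ (obsSpan A C l).map (stateMat x k).vecMulLinear := by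
  rw [obsSpan, map_span, ← Set.range_comp]
  refine sup_span_range_eq_of_sub_mem fun ia => ?_
  rw [show Y ia = _ from funext (hY ia)]
  exact outputRow_sub_mem_span_hankel hE (by omega) ia.2

theorem rank_fromRows_hankel_outputRows_eq [DecidableEq ι] (hE : Explains A B C D u y x)
    {k l : ℕ} (hl : l ≤ k + 1) (Y : Matrix (Fin l × Fin p) (Fin (T - k)) ℝ)
    (hY : ∀ ia j, Y ia j = y ⟨ia.1 + j, by have := ia.1.isLt; have := j.isLt; omega⟩ ia.2) :
    (fromRows (hankel u k) Y).rank
      = finrank ℝ ↥(span ℝ (Set.range (hankel u k))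
          ⊔ (obsSpan A C l).map (stateMat x k).vecMulLinear) := by
  rw [rank_eq_finrank_span_row, span_range_fromRows, ← sup_span_outputRows_eq hE hl Y hY]
  rfl

theorem delta_le_rho [DecidableEq ι] (hE : Explains A B C D u y x) (k : ℕ) :
    delta u y k ≤ rho A C k := by
  have hH : (Hmat u y k).rank = _ :=
    rank_fromRows_hankel_outputRows_eq hE le_rfl (hankel y k) fun _ _ => rfl
  have hG : (Gmat u y k).rank = _ :=
    rank_fromRows_hankel_outputRows_eq hE k.le_succ _ fun _ _ => rfl
  have key : (Hmat u y k).rank + obsRank A C k ≤ (Gmat u y k).rank + obsRank A C (k + 1) := by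
    rw [hH, hG, obsRank_eq_finrank_obsSpan, obsRank_eq_finrank_obsSpan]
    exact finrank_sup_map_add_le _ _ (obsSpan_mono A C k.le_succ)
  unfold delta rho
  omega

theorem sum_delta_le_obsRank [DecidableEq ι] (hE : Explains A B C D u y x) (r : ℕ) :
    ∑ i ∈ range r, delta u y i ≤ obsRank A C r :=
  (sum_le_sum fun i _ => delta_le_rho hE i).trans (sum_range_rho A C r).le

end Data

theorem stmt15_general {n m p T : ℕ}
    (u : Fin T → Fin m → ℝ) (y : Fin T → Fin p → ℝ)
    (q : ℕ) (hq0 : delta u y q = 0)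
    (A : Matrix (Fin n) (Fin n) ℝ) (B : Matrix (Fin n) (Fin m) ℝ)
    (C : Matrix (Fin p) (Fin n) ℝ) (D : Matrix (Fin p) (Fin m) ℝ)
    (x : Fin (T + 1) → Fin n → ℝ)
    (hE : Explains A B C D u y x) :
    ((lag A C : ℤ) - (q : ℤ) ≤
        (n : ℤ) - ∑ i ∈ Finset.range (q + 1), (delta u y i : ℤ)) ∧
    ((lag A C : ℤ) ≤
        (n : ℤ) - ∑ i ∈ Finset.range (q + 1), (delta u y i : ℤ) + (q : ℤ)) := by
  have hsum : ∑ i ∈ range (q + 1), delta u y i ≤ obsRank A C q := by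
    rw [sum_range_succ, hq0, add_zero]
    exact sum_delta_le_obsRank hE q
  have hlag := obsRank_add_lag_sub_le_card A C q
  rw [Fintype.card_fin] at hlag
  rw [← Nat.cast_sum]
  omega

theorem stmt15 {n m p T : ℕ}
    (u : Fin T → Fin m → ℝ) (y : Fin T → Fin p → ℝ)
    (q : ℕ) (hqT : q ≤ T - 1) (hq0 : delta u y q = 0)
    (hqmin : ∀ j < q, delta u y j ≠ 0)
    (A : Matrix (Fin n) (Fin n) ℝ) (B : Matrix (Fin n) (Fin m) ℝ)
    (C : Matrix (Fin p) (Fin n) ℝ) (D : Matrix (Fin p) (Fin m) ℝ)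
    (x : Fin (T + 1) → Fin n → ℝ)
    (hE : Explains A B C D u y x)
    (hlq : q ≤ lag A C) :
    ((lag A C : ℤ) - (q : ℤ) ≤
        (n : ℤ) - ∑ i ∈ Finset.range (q + 1), (delta u y i : ℤ)) ∧
    ((lag A C : ℤ) ≤
        (n : ℤ) - ∑ i ∈ Finset.range (q + 1), (delta u y i : ℤ) + (q : ℤ)) :=
  stmt15_general u y q hq0 A B C D x hE
end
end
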